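/- Let M, K, T be positive integers with T ≤ K ≤ M. Then there exists a family P of K-subsets of [M] such that any two distinct members of P intersect in fewer than T elements, and |P| ≥ C(M,K) / (∑_{i=T}^{K} C(K,i)·C(M−K,K−i)). -/

import Mathlib

/-!
A maximal family of `K`-subsets of `[M]` with pairwise intersections smaller than `T` is also
a covering: every `K`-subset meets some member in at least `T` elements, since otherwise it
could be added. Hence `C(M, K)` is at most `|P|` times the size of the "ball" of `K`-subsets
meeting a fixed one in at least `T` elements, and a `K`-subset meeting `A` in exactly `i`
elements is determined by an `i`-subset of `A` and a `(K - i)`-subset of its complement.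
-/

open Finset

namespace Finset

variable {α : Type*}

theorem exists_pairwise_not_and_forall_exists_rel (U : Finset α) (r : α → α → Prop)
    (hsymm : ∀ a b, r a b → r b a) (hrefl : ∀ a ∈ U, r a a) :
    ∃ P ⊆ U, (P : Set α).Pairwise (fun a b => ¬ r a b) ∧ ∀ b ∈ U, ∃ a ∈ P, r a b := by
  classical
  obtain ⟨P, hP, hmax⟩ := exists_max_image
    (U.powerset.filter fun P : Finset α => (P : Set α).Pairwise (fun a b => ¬ r a b))
    card ⟨∅, by simp⟩
  rw [mem_filter, mem_powerset] at hP
  refine ⟨P, hP.1, hP.2, fun b hb => ?_⟩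
  by_contra! hfar
  have hbP : b ∉ P := fun hbP => hfar b hbP (hrefl b hb)
  have hins : ((insert b P : Finset α) : Set α).Pairwise (fun a b => ¬ r a b) := by
    rw [coe_insert, Set.pairwise_insert]
    exact ⟨hP.2, fun a ha _ => ⟨fun hba => hfar a ha (hsymm b a hba), hfar a ha⟩⟩
  have := hmax (insert b P) (mem_filter.2 ⟨mem_powerset.2 (insert_subset hb hP.1), hins⟩)
  rw [card_insert_of_notMem hbP] at this
  omega

theorem exists_pairwise_not_and_card_le_mul (U : Finset α) (r : α → α → Prop)
    [DecidableRel r] (hsymm : ∀ a b, r a b → r b a) (hrefl : ∀ a ∈ U, r a a) (n : ℕ)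
    (hn : ∀ a ∈ U, #(U.filter (r a)) ≤ n) :
    ∃ P ⊆ U, (P : Set α).Pairwise (fun a b => ¬ r a b) ∧ #U ≤ #P * n := by
  classical
  obtain ⟨P, hPU, hP, hcover⟩ := exists_pairwise_not_and_forall_exists_rel U r hsymm hrefl
  refine ⟨P, hPU, hP, ?_⟩
  calc #U ≤ #(P.biUnion fun a => U.filter (r a)) := card_le_card fun b hb => by
          obtain ⟨a, ha, hab⟩ := hcover b hb
          exact mem_biUnion.2 ⟨a, ha, mem_filter.2 ⟨hb, hab⟩⟩
    _ ≤ #P * n := card_biUnion_le_card_mul _ _ _ fun a ha => hn a (hPU ha)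

variable [DecidableEq α]

theorem card_powersetCard_filter_card_inter_eq_le (s A : Finset α) (hA : A ⊆ s) (K i : ℕ) :
    #((powersetCard K s).filter fun B => #(A ∩ B) = i) ≤
      (#A).choose i * (#s - #A).choose (K - i) := by
  have hsplit : (powersetCard K s).filter (fun B => #(A ∩ B) = i) ⊆
      (powersetCard i A ×ˢ powersetCard (K - i) (s \ A)).image fun p => p.1 ∪ p.2 := by
    intro B hB
    obtain ⟨⟨hBs, hBK⟩, hBi⟩ := by simpa only [mem_filter, mem_powersetCard] using hB
    have hdiff : #(B \ A) = K - i := by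
      have := card_sdiff_add_card_inter B A
      rw [inter_comm] at this
      omega
    have hunion : A ∩ B ∪ B \ A = B := by rw [union_comm, inter_comm, sdiff_union_inter]
    refine mem_image.2 ⟨(A ∩ B, B \ A), ?_, hunion⟩
    simp only [mem_product, mem_powersetCard]
    exact ⟨⟨inter_subset_left, hBi⟩, sdiff_subset_sdiff hBs le_rfl, hdiff⟩
  calc _ ≤ _ := card_le_card hsplit
    _ ≤ _ := card_image_le
    _ = _ := by rw [card_product, card_powersetCard, card_powersetCard, card_sdiff_of_subset hA]

theorem card_powersetCard_filter_le_card_inter_le (s A : Finset α) (hA : A ⊆ s) (K T : ℕ) :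
    #((powersetCard K s).filter fun B => T ≤ #(A ∩ B)) ≤
      ∑ i ∈ Icc T K, (#A).choose i * (#s - #A).choose (K - i) := by
  have hsplit : (powersetCard K s).filter (fun B => T ≤ #(A ∩ B)) ⊆
      (Icc T K).biUnion fun i => (powersetCard K s).filter fun B => #(A ∩ B) = i := by
    intro B hB
    obtain ⟨⟨-, hBK⟩, hTB⟩ := by simpa only [mem_filter, mem_powersetCard] using hB
    have : #(A ∩ B) ≤ K := hBK ▸ card_le_card inter_subset_right
    exact mem_biUnion.2 ⟨#(A ∩ B), mem_Icc.2 ⟨hTB, this⟩, mem_filter.2 ⟨(mem_filter.1 hB).1, rfl⟩⟩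
  calc _ ≤ _ := card_le_card hsplit
    _ ≤ _ := card_biUnion_le
    _ ≤ _ := sum_le_sum fun i _ => card_powersetCard_filter_card_inter_eq_le s A hA K i

end Finset

theorem gilbert_bound_general (M K T : ℕ) (hTK : T ≤ K) :
    ∃ P : Finset (Finset ℕ),
      (∀ A ∈ P, A ⊆ Finset.range M ∧ A.card = K) ∧
      (∀ A ∈ P, ∀ B ∈ P, A ≠ B → (A ∩ B).card < T) ∧
      (M.choose K : ℝ) /
          (∑ i ∈ Finset.Icc T K, (K.choose i : ℝ) * ((M - K).choose (K - i) : ℝ))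
        ≤ (P.card : ℝ) := by
  set S := ∑ i ∈ Icc T K, K.choose i * (M - K).choose (K - i)
  obtain ⟨P, hPU, hP, hcount⟩ := exists_pairwise_not_and_card_le_mul
    (powersetCard K (range M)) (fun A B => T ≤ #(A ∩ B))
    (fun A B h => by rwa [inter_comm])
    (fun A hA => by rwa [inter_self, (mem_powersetCard.1 hA).2]) S
    (fun A hA => by
      obtain ⟨hAM, hAK⟩ := mem_powersetCard.1 hA
      simpa [hAK] using card_powersetCard_filter_le_card_inter_le _ A hAM K T)
  refine ⟨P, fun A hA => mem_powersetCard.1 (hPU hA),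
    fun A hA B hB hAB => not_le.1 (hP hA hB hAB), ?_⟩
  have hSpos : 0 < S :=
    lt_of_lt_of_le (by simp) (single_le_sum (fun i _ => Nat.zero_le _) (right_mem_Icc.2 hTK))
  rw [card_powersetCard, card_range] at hcount
  rw [show (∑ i ∈ Icc T K, (K.choose i : ℝ) * ((M - K).choose (K - i) : ℝ)) = S by
      push_cast [S]; rfl,
    div_le_iff₀ (by exact_mod_cast hSpos)]
  exact_mod_cast hcount

theorem gilbert_bound (M K T : ℕ) (hT : 0 < T) (hTK : T ≤ K) (hKM : K ≤ M) :
    ∃ P : Finset (Finset ℕ),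
      (∀ A ∈ P, A ⊆ Finset.range M ∧ A.card = K) ∧
      (∀ A ∈ P, ∀ B ∈ P, A ≠ B → (A ∩ B).card < T) ∧
      (M.choose K : ℝ) /
          (∑ i ∈ Finset.Icc T K, (K.choose i : ℝ) * ((M - K).choose (K - i) : ℝ))
        ≤ (P.card : ℝ) :=
  gilbert_bound_general M K T hTK
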